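/- Let β > 1 with β ∉ ℕ, n ∈ ℕ, and let w ∈ Σ_β^n end with a prefix of ε(1,β), i.e., w = w₁⋯w_{n−s}ε₁⋯ε_s for some 1 ≤ s ≤ n. Then in the lexicographic ordering of Σ_β^n, the τ_β(s) consecutive words ending at w (that is, w and the τ_β(s) − 1 words immediately preceding it) are all non-full, while the word immediately preceding these τ_β(s) words is full. -/

import Mathlib

/-!
Read a word `w` of length `n` as the number `wordVal β w = ∑ wᵢ β^(n-i)`. Then `w` is
admissible iff every tail satisfies `wordVal β (w_{k+1}⋯w_n) < β^(n-k)`, and the point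
`(wordVal β w + c) / βⁿ` (`c ≥ 0`) lies in `I(w)` iff every tail still satisfies this after
adding `c`; with `c` ranging over `[0, 1)`, `w` is full as soon as every tail leaves room `1`.

For `w = u ε₁⋯ε_s`, `T_β^n` maps `I(w)` into `[0, T_β^s 1)`, so `w` is not full. Let `g ≤ s`
be the last position of a nonzero digit among `ε₁⋯ε_s`. Then
`w' = u ε₁⋯ε_{g-1}(ε_g - 1)ε₁⋯ε_{s-g}` has value `wordVal β w - T_β^{s-g} 1` and all its
tails leave room `T_β^{s-g} 1 > 0`, so the whole gap between `w'` and `w` lies in `I(w')`: `w'` is the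
immediate predecessor of `w`. It ends with the prefix of length `s - g` of `ε(1, β)`, and it is
full when `g = s`; as `τ_β(s) = τ_β(s - g) + 1`, induction on `s` concludes.
-/

noncomputable def Tb (β x : ℝ) : ℝ := β * x - ⌊β * x⌋

/-- The (i+1)-th digit of the β-expansion of x (0-indexed). -/
noncomputable def dig (β x : ℝ) (i : ℕ) : ℕ := (⌊β * (Tb β)^[i] x⌋).toNat

/-- w is an admissible word for base β. -/
def Adm (β : ℝ) (w : List ℕ) : Prop :=
  ∃ x, x ∈ Set.Ico (0:ℝ) 1 ∧ ∀ i (h : i < w.length), w[i] = dig β x i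

/-- u is an admissible digit sequence for base β. -/
def AdmSeq (β : ℝ) (u : ℕ → ℕ) : Prop :=
  ∃ x, x ∈ Set.Ico (0:ℝ) 1 ∧ ∀ i, u i = dig β x i

/-- The cylinder I(w) ⊆ [0,1). -/
def cyl (β : ℝ) (w : List ℕ) : Set ℝ :=
  {x | x ∈ Set.Ico (0:ℝ) 1 ∧ ∀ i (h : i < w.length), w[i] = dig β x i}

/-- w is a full word: T_β^{|w|} maps I(w) onto [0,1). -/
def Full (β : ℝ) (w : List ℕ) : Prop :=
  (Tb β)^[w.length] '' cyl β w = Set.Ico 0 1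

/-- The β-expansion of 1 is finite with length M. -/
def FiniteLen (β : ℝ) (M : ℕ) : Prop :=
  0 < M ∧ dig β 1 (M-1) ≠ 0 ∧ ∀ j, M ≤ j → dig β 1 j = 0

open Classical in
/-- The (i+1)-th digit of the modified β-expansion ε*(1,β) (0-indexed). -/
noncomputable def modExp (β : ℝ) (i : ℕ) : ℕ :=
  if h : ∃ M, FiniteLen β M then
    (if (i+1) % (Nat.find h) = 0 then dig β 1 (Nat.find h - 1) - 1
     else dig β 1 (i % Nat.find h))
  else dig β 1 i

/-- View a finite word as the sequence w0^∞. -/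
def wordSeq (w : List ℕ) (i : ℕ) : ℕ := w.getD i 0

/-- Strict lexicographic order on sequences. -/
def seqLt (u v : ℕ → ℕ) : Prop := ∃ k, (∀ i, i < k → u i = v i) ∧ u k < v k

/-- Strict lexicographic order on finite words (identified with w0^∞). -/
def wlt (u v : List ℕ) : Prop := seqLt (wordSeq u) (wordSeq v)

/-- Concatenation of a finite word with a sequence. -/
def catSeq (w : List ℕ) (u : ℕ → ℕ) (i : ℕ) : ℕ :=
  if h : i < w.length then w[i] else u (i - w.length)

open Classical in
/-- The largest position k ≤ s with ε_k ≠ 0 (greedy step). -/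
noncomputable def greedyStep (β : ℝ) (s : ℕ) : ℕ :=
  Nat.findGreatest (fun k => 1 ≤ k ∧ dig β 1 (k-1) ≠ 0) s

/-- τ_β(s): number of terms in the greedy representation of s by nonzero positions. -/
noncomputable def tau (β : ℝ) : ℕ → ℕ
  | 0 => 0
  | s + 1 => tau β (s - (greedyStep β (s+1) - 1)) + 1
decreasing_by omega

open Classical in
/-- r_s(β): maximal length of a string of 0's in ε₁*⋯ε_s*. -/
noncomputable def rrun (β : ℝ) (s : ℕ) : ℕ :=
  Nat.findGreatest (fun k => 1 ≤ k ∧ ∃ i, i + k ≤ s ∧ ∀ t, t < k → modExp β (i + t) = 0) s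

/-- v is the immediate successor of u in the lexicographic order on Σ_β^n. -/
def SuccIn (β : ℝ) (n : ℕ) (u v : List ℕ) : Prop :=
  u.length = n ∧ v.length = n ∧ Adm β u ∧ Adm β v ∧ wlt u v ∧
  ¬ ∃ z : List ℕ, z.length = n ∧ Adm β z ∧ wlt u z ∧ wlt z v

/-- There is a run of l consecutive non-full words in Σ_β^n. -/
def NonFullRun (β : ℝ) (n l : ℕ) : Prop :=
  ∃ f : ℕ → List ℕ,
    (∀ j, j < l → (f j).length = n ∧ Adm β (f j) ∧ ¬ Full β (f j)) ∧
    (∀ j, j + 1 < l → SuccIn β n (f j) (f (j+1)))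

/-- There is a maximal run of l consecutive non-full words in Σ_β^n. -/
def MaxNonFullRun (β : ℝ) (n l : ℕ) : Prop :=
  0 < l ∧ ∃ f : ℕ → List ℕ,
    (∀ j, j < l → (f j).length = n ∧ Adm β (f j) ∧ ¬ Full β (f j)) ∧
    (∀ j, j + 1 < l → SuccIn β n (f j) (f (j+1))) ∧
    (∀ u, SuccIn β n u (f 0) → Full β u) ∧
    (∀ u, SuccIn β n (f (l-1)) u → Full β u)

/-- There is a maximal run of l consecutive full words in Σ_β^n. -/
def MaxFullRun (β : ℝ) (n l : ℕ) : Prop :=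
  0 < l ∧ ∃ f : ℕ → List ℕ,
    (∀ j, j < l → (f j).length = n ∧ Adm β (f j) ∧ Full β (f j)) ∧
    (∀ j, j + 1 < l → SuccIn β n (f j) (f (j+1))) ∧
    (∀ u, SuccIn β n u (f 0) → ¬ Full β u) ∧
    (∀ u, SuccIn β n (f (l-1)) u → ¬ Full β u)

/-- The canonical decomposition of an admissible word, as in the structure theorem:
p.1 is the list of block lengths k₁,…,k_p and p.2 is the final length l. -/
def Decomp (β : ℝ) (w : List ℕ) (p : List ℕ × ℕ) : Prop :=
  1 ≤ p.2 ∧ (∀ k ∈ p.1, 1 ≤ k) ∧ p.1.sum + p.2 = w.length ∧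
  (∀ j, j < p.1.length →
    (∀ t, t < p.1.getD j 0 - 1 → w.getD ((p.1.take j).sum + t) 0 = dig β 1 t) ∧
    w.getD ((p.1.take j).sum + (p.1.getD j 0 - 1)) 0 < dig β 1 (p.1.getD j 0 - 1)) ∧
  (∀ t, t < p.2 - 1 → w.getD (p.1.sum + t) 0 = dig β 1 t) ∧
  w.getD (p.1.sum + (p.2 - 1)) 0 ≤ dig β 1 (p.2 - 1)


open Function

section BetaTransformation

variable {β : ℝ}

lemma Tb_mem_Ico (x : ℝ) : Tb β x ∈ Set.Ico (0 : ℝ) 1 :=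
  ⟨Int.fract_nonneg _, Int.fract_lt_one _⟩

lemma Tb_zero : Tb β 0 = 0 := by simp [Tb]

lemma Tb_iterate_mem_Ico {x : ℝ} (hx : x ∈ Set.Ico (0 : ℝ) 1) (k : ℕ) :
    (Tb β)^[k] x ∈ Set.Ico (0 : ℝ) 1 := by
  cases k with
  | zero => exact hx
  | succ k => rw [iterate_succ_apply']; exact Tb_mem_Ico _

lemma Tb_iterate_nonneg {x : ℝ} (hx : 0 ≤ x) (k : ℕ) : 0 ≤ (Tb β)^[k] x := by
  cases k with
  | zero => exact hx
  | succ k => rw [iterate_succ_apply']; exact (Tb_mem_Ico _).1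

lemma cast_dig (hβ : 0 ≤ β) {x : ℝ} (hx : 0 ≤ x) (k : ℕ) :
    (dig β x k : ℤ) = ⌊β * (Tb β)^[k] x⌋ :=
  Int.toNat_of_nonneg (Int.floor_nonneg.2 (mul_nonneg hβ (Tb_iterate_nonneg hx k)))

lemma eq_dig_iff (hβ : 0 ≤ β) {x : ℝ} (hx : 0 ≤ x) (k d : ℕ) :
    d = dig β x k ↔ β * (Tb β)^[k] x - d ∈ Set.Ico (0 : ℝ) 1 := by
  rw [← Nat.cast_inj (R := ℤ), cast_dig hβ hx, eq_comm, Int.floor_eq_iff, Set.mem_Ico,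
    Int.cast_natCast, sub_nonneg, sub_lt_iff_lt_add']

lemma Tb_iterate_succ (hβ : 0 ≤ β) {x : ℝ} (hx : 0 ≤ x) (k : ℕ) :
    (Tb β)^[k + 1] x = β * (Tb β)^[k] x - dig β x k := by
  rw [iterate_succ_apply', Tb, ← cast_dig hβ hx, Int.cast_natCast]

lemma Tb_iterate_one_le_one (m : ℕ) : (Tb β)^[m] 1 ≤ 1 := by
  cases m with
  | zero => exact le_rfl
  | succ m => rw [iterate_succ_apply']; exact (Tb_mem_Ico _).2.le

lemma Tb_iterate_one_pos_of_le {m s : ℕ} (hms : m ≤ s) (hs : 0 < (Tb β)^[s] 1) :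
    0 < (Tb β)^[m] 1 := by
  refine (Tb_iterate_nonneg zero_le_one m).lt_of_ne fun h0 => hs.ne' ?_
  rw [← Nat.sub_add_cancel hms, iterate_add_apply, ← h0, iterate_fixed Tb_zero]

lemma one_le_dig_one_zero (hβ : 1 < β) : 1 ≤ dig β 1 0 := by
  have h := cast_dig (by linarith) zero_le_one 0 (β := β)
  rw [iterate_zero_apply, mul_one] at h
  have : (1 : ℤ) ≤ ⌊β⌋ := Int.le_floor.2 (by exact_mod_cast hβ.le)
  omega

lemma Tb_iterate_one_add_of_dig_eq_zero (hβ : 0 ≤ β) {g r : ℕ}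
    (hz : ∀ t, g ≤ t → t < g + r → dig β 1 t = 0) :
    (Tb β)^[g + r] 1 = β ^ r * (Tb β)^[g] 1 := by
  induction r with
  | zero => simp
  | succ r ih =>
    rw [← add_assoc, Tb_iterate_succ hβ zero_le_one, ih fun t h1 h2 => hz t h1 (by omega),
      hz _ (by omega) (by omega), pow_succ]
    push_cast
    ring

end BetaTransformation

def wordVal (β : ℝ) : List ℕ → ℝ
  | [] => 0
  | d :: w => d * β ^ w.length + wordVal β w

section WordValue

variable {β : ℝ}

@[simp] lemma wordVal_nil : wordVal β [] = 0 := rfl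

lemma wordVal_cons (d : ℕ) (w : List ℕ) : wordVal β (d :: w) = d * β ^ w.length + wordVal β w :=
  rfl

lemma wordVal_append (a b : List ℕ) :
    wordVal β (a ++ b) = wordVal β a * β ^ b.length + wordVal β b := by
  induction a with
  | nil => simp
  | cons d a ih =>
    rw [List.cons_append, wordVal_cons, wordVal_cons, ih, List.length_append, pow_add]
    ring

lemma wordVal_append_singleton (a : List ℕ) (d : ℕ) :
    wordVal β (a ++ [d]) = β * wordVal β a + d := by
  rw [wordVal_append, wordVal_cons]
  simp [mul_comm]

lemma wordVal_nonneg (hβ : 0 ≤ β) (w : List ℕ) : 0 ≤ wordVal β w := by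
  induction w with
  | nil => exact le_rfl
  | cons d w ih => rw [wordVal_cons]; positivity

lemma wordVal_take_succ (w : List ℕ) {k : ℕ} (hk : k < w.length) :
    wordVal β (w.take (k + 1)) = β * wordVal β (w.take k) + w[k] := by
  rw [← List.take_concat_get' w k hk, wordVal_append_singleton]

lemma pow_mul_wordVal_add_div_sub (hβ : 0 < β) (w : List ℕ) {k : ℕ} (hk : k ≤ w.length)
    (c : ℝ) :
    β ^ k * ((wordVal β w + c) / β ^ w.length) - wordVal β (w.take k)
      = (wordVal β (w.drop k) + c) / β ^ (w.length - k) := by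
  have hsplit : wordVal β w = wordVal β (w.take k) * β ^ (w.length - k) + wordVal β (w.drop k) := by
    conv_lhs => rw [← List.take_append_drop k w]
    rw [wordVal_append, List.length_drop]
  have hpow : β ^ w.length = β ^ k * β ^ (w.length - k) := by rw [← pow_add, Nat.add_sub_cancel' hk]
  rw [hsplit, hpow]
  field_simp
  ring

end WordValue

section Cylinder

variable {β : ℝ}

lemma Tb_iterate_of_mem_cyl (hβ : 0 ≤ β) {w : List ℕ} {x : ℝ} (hx : x ∈ cyl β w) {k : ℕ}
    (hk : k ≤ w.length) : (Tb β)^[k] x = β ^ k * x - wordVal β (w.take k) := by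
  induction k with
  | zero => simp
  | succ k ih =>
    rw [Tb_iterate_succ hβ hx.1.1, ih (by omega), ← hx.2 k (by omega),
      wordVal_take_succ w (by omega), pow_succ]
    ring

lemma mem_cyl_iff (hβ : 0 ≤ β) {w : List ℕ} {x : ℝ} :
    x ∈ cyl β w ↔ ∀ k ≤ w.length, β ^ k * x - wordVal β (w.take k) ∈ Set.Ico (0 : ℝ) 1 := by
  refine ⟨fun hx k hk => Tb_iterate_of_mem_cyl hβ hx hk ▸ Tb_iterate_mem_Ico hx.1 k, fun h => ?_⟩
  have hx : x ∈ Set.Ico (0 : ℝ) 1 := by simpa using h 0 (Nat.zero_le _)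
  refine ⟨hx, fun i => ?_⟩
  induction i using Nat.strong_induction_on with
  | _ i ih =>
    intro hi
    have hcyl : x ∈ cyl β (w.take i) :=
      ⟨hx, fun j hj => by rw [List.getElem_take]; exact ih j (by simp at hj; omega) _⟩
    rw [eq_dig_iff hβ hx.1, Tb_iterate_of_mem_cyl hβ hcyl (by simp; omega), List.take_take,
      min_self]
    convert h (i + 1) hi using 1
    rw [wordVal_take_succ w hi, pow_succ]
    ring

lemma wordVal_add_div_mem_cyl_iff (hβ : 0 < β) {w : List ℕ} {c : ℝ} (hc : 0 ≤ c) :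
    (wordVal β w + c) / β ^ w.length ∈ cyl β w ↔
      ∀ k ≤ w.length, wordVal β (w.drop k) + c < β ^ (w.length - k) := by
  rw [mem_cyl_iff hβ.le]
  refine forall₂_congr fun k hk => ?_
  have hpos : 0 < β ^ (w.length - k) := by positivity
  rw [pow_mul_wordVal_add_div_sub hβ w hk, Set.mem_Ico, div_lt_one hpos,
    and_iff_right (div_nonneg (add_nonneg (wordVal_nonneg hβ.le _) hc) hpos.le)]

lemma wordVal_le_of_mem_cyl (hβ : 0 ≤ β) {w : List ℕ} {x : ℝ} (hx : x ∈ cyl β w) :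
    wordVal β w ≤ β ^ w.length * x := by
  have h := ((mem_cyl_iff hβ).1 hx w.length le_rfl).1
  rw [List.take_length] at h
  linarith

lemma adm_iff (hβ : 0 < β) {w : List ℕ} :
    Adm β w ↔ ∀ k ≤ w.length, wordVal β (w.drop k) < β ^ (w.length - k) := by
  constructor
  · rintro ⟨x, hx⟩
    replace hx : x ∈ cyl β w := hx
    set c := β ^ w.length * x - wordVal β w
    have hc : 0 ≤ c := sub_nonneg.2 (wordVal_le_of_mem_cyl hβ.le hx)
    have hxc : x = (wordVal β w + c) / β ^ w.length := by field_simp; ring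
    rw [hxc, wordVal_add_div_mem_cyl_iff hβ hc] at hx
    exact fun k hk => by linarith [hx k hk]
  · intro h
    exact ⟨_, (wordVal_add_div_mem_cyl_iff hβ le_rfl).2 fun k hk => by simpa using h k hk⟩

lemma wordVal_div_mem_cyl (hβ : 0 < β) {w : List ℕ} (hw : Adm β w) :
    wordVal β w / β ^ w.length ∈ cyl β w := by
  simpa using (wordVal_add_div_mem_cyl_iff hβ le_rfl).2 fun k hk => by
    simpa using (adm_iff hβ).1 hw k hk

end Cylinder

section Order

variable {β : ℝ}

lemma wlt_append_cons {a l l' : List ℕ} {d d' : ℕ} (h : d < d') :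
    wlt (a ++ d :: l) (a ++ d' :: l') :=
  ⟨a.length, fun i hi => by simp only [wordSeq, List.getD_append _ _ _ _ hi],
    by simpa only [wordSeq, List.getD_append_right _ _ _ _ le_rfl, Nat.sub_self,
      List.getD_cons_zero]⟩

lemma lt_of_wlt_of_mem_cyl (hβ : 0 < β) {p q : List ℕ} (hl : p.length = q.length)
    (h : wlt p q) {x y : ℝ} (hx : x ∈ cyl β p) (hy : y ∈ cyl β q) : x < y := by
  obtain ⟨k, hpre, hk⟩ := h
  have hkq : k < q.length := by
    by_contra hc
    rw [wordSeq, wordSeq, List.getD_eq_default _ _ (not_lt.1 hc)] at hk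
    exact Nat.not_lt_zero _ hk
  have hkp : k < p.length := hl ▸ hkq
  have htake : p.take k = q.take k := List.ext_getElem (by simp [hl]) fun i hi _ => by
    have := hpre i (by simp at hi; omega)
    simp only [wordSeq, List.getD_eq_getElem _ _ (by simp at hi; omega : i < p.length),
      List.getD_eq_getElem _ _ (by simp at hi; omega : i < q.length)] at this
    simpa using this
  have hdigit : (p[k] : ℝ) + 1 ≤ q[k] := by
    rw [wordSeq, wordSeq, List.getD_eq_getElem _ _ hkp, List.getD_eq_getElem _ _ hkq] at hk
    exact_mod_cast hk
  have hxk := ((mem_cyl_iff hβ.le).1 hx (k + 1) hkp).2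
  have hyk := ((mem_cyl_iff hβ.le).1 hy (k + 1) hkq).1
  rw [wordVal_take_succ p hkp] at hxk
  rw [wordVal_take_succ q hkq, ← htake] at hyk
  have : β ^ (k + 1) * x < β ^ (k + 1) * y := by linarith
  exact lt_of_mul_lt_mul_left this (by positivity)

end Order

section Fullness

variable {β : ℝ}

lemma full_of_forall_wordVal_drop_add_one_le (hβ : 0 < β) {w : List ℕ}
    (h : ∀ k ≤ w.length, wordVal β (w.drop k) + 1 ≤ β ^ (w.length - k)) : Full β w := by
  refine Set.Subset.antisymm ?_ fun t ht => ?_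
  · rintro _ ⟨x, hx, rfl⟩
    exact Tb_iterate_mem_Ico hx.1 _
  · have hmem : (wordVal β w + t) / β ^ w.length ∈ cyl β w :=
      (wordVal_add_div_mem_cyl_iff hβ ht.1).2 fun k hk => by linarith [h k hk, ht.2]
    refine ⟨_, hmem, ?_⟩
    rw [Tb_iterate_of_mem_cyl hβ.le hmem le_rfl, List.take_length,
      mul_div_cancel₀ _ (by positivity)]
    ring

/-- The whole gap `[wordVal β a / βⁿ, wordVal β b / βⁿ)` lies in `I(a)`, so no word of
length `n` lies strictly between `a` and `b`. -/
lemma succIn_of_wordVal_eq_add (hβ : 0 < β) {n : ℕ} {a b : List ℕ} (ha : a.length = n)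
    (hb : b.length = n) {c : ℝ} (hc : 0 < c) (hval : wordVal β b = wordVal β a + c)
    (htail : ∀ k ≤ n, wordVal β (a.drop k) + c ≤ β ^ (n - k)) (hadm : Adm β b)
    (hlt : wlt a b) : SuccIn β n a b := by
  subst ha
  have hmem : ∀ c', 0 ≤ c' → c' < c → (wordVal β a + c') / β ^ a.length ∈ cyl β a :=
    fun c' hc' hc'c => (wordVal_add_div_mem_cyl_iff hβ hc').2 fun k hk => by
      linarith [htail k hk]
  refine ⟨rfl, hb, ⟨_, hmem 0 le_rfl hc⟩, hadm, hlt, ?_⟩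
  rintro ⟨z, hz, ⟨y, hy⟩, haz, hzb⟩
  replace hy : y ∈ cyl β z := hy
  have hpos : 0 < β ^ a.length := by positivity
  have hlow := lt_of_wlt_of_mem_cyl hβ hz.symm haz (hmem 0 le_rfl hc) hy
  have hup := lt_of_wlt_of_mem_cyl hβ (hz.trans hb.symm) hzb hy (wordVal_div_mem_cyl hβ hadm)
  rw [hb, hval, lt_div_iff₀ hpos] at hup
  rw [add_zero, div_lt_iff₀ hpos] at hlow
  have hya : y = (wordVal β a + (β ^ a.length * y - wordVal β a)) / β ^ a.length := by
    field_simp; ring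
  exact lt_irrefl y
    (lt_of_wlt_of_mem_cyl hβ hz.symm haz (hya ▸ hmem _ (by linarith) (by linarith)) hy)

end Fullness

noncomputable def expPrefix (β : ℝ) (m : ℕ) : List ℕ := List.ofFn fun i : Fin m => dig β 1 i

/-- `ε₁⋯ε_{g-1}(ε_g - 1)ε₁⋯ε_r`. -/
noncomputable def lowered (β : ℝ) (g r : ℕ) : List ℕ :=
  expPrefix β (g - 1) ++ (dig β 1 (g - 1) - 1) :: expPrefix β r

section ExpansionOfOne

variable {β : ℝ}

@[simp] lemma length_expPrefix (m : ℕ) : (expPrefix β m).length = m := by simp [expPrefix]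

lemma expPrefix_succ (m : ℕ) : expPrefix β (m + 1) = expPrefix β m ++ [dig β 1 m] := by
  rw [expPrefix, List.ofFn_succ', List.concat_eq_append]
  rfl

lemma expPrefix_eq_append_cons {j m : ℕ} (h : j < m) :
    ∃ l, expPrefix β m = expPrefix β j ++ dig β 1 j :: l := by
  induction m, h using Nat.le_induction with
  | base => exact ⟨[], expPrefix_succ j⟩
  | succ m _ ih =>
    obtain ⟨l, hl⟩ := ih
    exact ⟨l ++ [dig β 1 m], by rw [expPrefix_succ, hl]; simp⟩

lemma wordVal_expPrefix_drop (hβ : 0 ≤ β) {j m : ℕ} (h : j ≤ m) :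
    wordVal β ((expPrefix β m).drop j) = β ^ (m - j) * (Tb β)^[j] 1 - (Tb β)^[m] 1 := by
  induction m with
  | zero =>
    obtain rfl : j = 0 := by omega
    simp [expPrefix]
  | succ m ih =>
    rcases h.eq_or_lt with rfl | hlt
    · simp [List.drop_eq_nil_of_le]
    · rw [expPrefix_succ, List.drop_append_of_le_length (by simp; omega),
        wordVal_append_singleton, ih (by omega), Tb_iterate_succ hβ zero_le_one,
        Nat.sub_add_comm (by omega), pow_succ]
      ring

lemma wordVal_expPrefix (hβ : 0 ≤ β) (m : ℕ) :
    wordVal β (expPrefix β m) = β ^ m - (Tb β)^[m] 1 := by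
  simpa using wordVal_expPrefix_drop hβ (Nat.zero_le m)

lemma not_full_append_expPrefix (hβ : 0 < β) (u : List ℕ) {t : ℕ} (ht : 1 ≤ t) :
    ¬ Full β (u ++ expPrefix β t) := by
  intro hfull
  have hmem : (Tb β)^[t] 1 ∈ Set.Ico (0 : ℝ) 1 := by
    obtain ⟨t, rfl⟩ : ∃ t', t = t' + 1 := ⟨t - 1, by omega⟩
    rw [iterate_succ_apply']
    exact Tb_mem_Ico _
  rw [← hfull] at hmem
  obtain ⟨x, hx, hTx⟩ := hmem
  -- `T^[n]` maps the cylinder of `u ε₁⋯ε_t` into `[0, T^[t] 1)`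
  have hu := ((mem_cyl_iff hβ.le).1 hx u.length (by simp)).2
  rw [List.take_left] at hu
  rw [Tb_iterate_of_mem_cyl hβ.le hx le_rfl, List.take_length, wordVal_append,
    wordVal_expPrefix hβ.le, List.length_append, length_expPrefix, pow_add] at hTx
  have : 0 < β ^ t := by positivity
  nlinarith

lemma length_lowered {g : ℕ} (hg : 1 ≤ g) (r : ℕ) : (lowered β g r).length = g + r := by
  simp [lowered]
  omega

lemma wordVal_lowered_drop_add (hβ : 0 ≤ β) {g : ℕ} (hg : 1 ≤ g) (hd : dig β 1 (g - 1) ≠ 0)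
    (r : ℕ) {j : ℕ} (hj : j ≤ g - 1) :
    wordVal β ((lowered β g r).drop j) + (Tb β)^[r] 1
      = β ^ (g + r - j) * (Tb β)^[j] 1 - β ^ r * (Tb β)^[g] 1 := by
  have hTg : (Tb β)^[g] 1 = β * (Tb β)^[g - 1] 1 - dig β 1 (g - 1) := by
    conv_lhs => rw [← Nat.sub_add_cancel hg]
    exact Tb_iterate_succ hβ zero_le_one _
  have hpow : β ^ (g + r - j) = β ^ (g - 1 - j) * β ^ r * β := by
    rw [← pow_add, ← pow_succ]
    congr 1
    omega
  rw [lowered, List.drop_append_of_le_length (by simpa), wordVal_append, wordVal_cons,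
    wordVal_expPrefix_drop hβ hj, wordVal_expPrefix hβ, Nat.cast_sub (Nat.one_le_iff_ne_zero.2 hd),
    List.length_cons, length_expPrefix, hTg, hpow, pow_succ]
  push_cast
  ring

lemma wordVal_lowered_drop_add_le (hβ : 0 ≤ β) {g : ℕ} (hg : 1 ≤ g)
    (hd : dig β 1 (g - 1) ≠ 0) (r : ℕ) {j : ℕ} (hj : j ≤ g + r) :
    wordVal β ((lowered β g r).drop j) + (Tb β)^[r] 1 ≤ β ^ (g + r - j) := by
  rcases le_or_gt j (g - 1) with hjg | hjg
  · rw [wordVal_lowered_drop_add hβ hg hd r hjg]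
    have := mul_le_of_le_one_right (pow_nonneg hβ (g + r - j)) (Tb_iterate_one_le_one (β := β) j)
    have := mul_nonneg (pow_nonneg hβ r) (Tb_iterate_nonneg zero_le_one (β := β) g)
    linarith
  · rw [lowered, List.drop_append, List.drop_eq_nil_of_le (by simp; omega), List.nil_append,
      length_expPrefix, show j - (g - 1) = j - g + 1 by omega, List.drop_succ_cons,
      wordVal_expPrefix_drop hβ (by omega), sub_add_cancel, show g + r - j = r - (j - g) by omega]
    exact mul_le_of_le_one_right (pow_nonneg hβ _) (Tb_iterate_one_le_one _)

lemma wordVal_expPrefix_eq_wordVal_lowered_add (hβ : 0 ≤ β) {g r : ℕ} (hg : 1 ≤ g)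
    (hd : dig β 1 (g - 1) ≠ 0) (hz : ∀ t, g ≤ t → t < g + r → dig β 1 t = 0) :
    wordVal β (expPrefix β (g + r)) = wordVal β (lowered β g r) + (Tb β)^[r] 1 := by
  have h := wordVal_lowered_drop_add hβ hg hd r (Nat.zero_le _)
  rw [List.drop_zero, iterate_zero_apply, mul_one, Nat.sub_zero,
    ← Tb_iterate_one_add_of_dig_eq_zero hβ hz] at h
  rw [wordVal_expPrefix hβ, h]

lemma wlt_append_lowered {g : ℕ} (hg : 1 ≤ g) (hd : dig β 1 (g - 1) ≠ 0) (u : List ℕ)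
    (r : ℕ) : wlt (u ++ lowered β g r) (u ++ expPrefix β (g + r)) := by
  obtain ⟨l, hl⟩ := expPrefix_eq_append_cons (β := β) (show g - 1 < g + r by omega)
  rw [hl, lowered, ← List.append_assoc, ← List.append_assoc]
  exact wlt_append_cons (by omega)

end ExpansionOfOne

section Greedy

variable {β : ℝ}

lemma greedyStep_pos (hβ : 1 < β) {s : ℕ} (hs : 1 ≤ s) : 1 ≤ greedyStep β s :=
  Nat.le_findGreatest hs ⟨le_rfl, Nat.one_le_iff_ne_zero.1 (one_le_dig_one_zero hβ)⟩

lemma greedyStep_le (s : ℕ) : greedyStep β s ≤ s := Nat.findGreatest_le s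

lemma dig_greedyStep_ne_zero (hβ : 1 < β) {s : ℕ} (hs : 1 ≤ s) :
    dig β 1 (greedyStep β s - 1) ≠ 0 :=
  (Nat.findGreatest_spec (P := fun k => 1 ≤ k ∧ dig β 1 (k - 1) ≠ 0) hs
    ⟨le_rfl, Nat.one_le_iff_ne_zero.1 (one_le_dig_one_zero hβ)⟩).2

lemma dig_eq_zero_of_greedyStep_le {s t : ℕ} (h1 : greedyStep β s ≤ t) (h2 : t < s) :
    dig β 1 t = 0 := by
  by_contra hne
  exact Nat.findGreatest_is_greatest (P := fun k => 1 ≤ k ∧ dig β 1 (k - 1) ≠ 0)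
    (show greedyStep β s < t + 1 by omega) (by omega) ⟨by omega, by simpa using hne⟩

lemma tau_eq_tau_sub_greedyStep_add_one (hβ : 1 < β) {s : ℕ} (hs : 1 ≤ s) :
    tau β s = tau β (s - greedyStep β s) + 1 := by
  obtain ⟨m, rfl⟩ : ∃ m, s = m + 1 := ⟨s - 1, by omega⟩
  have := greedyStep_pos hβ hs
  rw [tau]
  congr 2
  omega

end Greedy

section Descent

variable {β : ℝ}

lemma Tb_iterate_one_pos_of_adm (hβ : 0 < β) {u : List ℕ} {s : ℕ}
    (hadm : Adm β (u ++ expPrefix β s)) : 0 < (Tb β)^[s] 1 := by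
  have h := (adm_iff hβ).1 hadm u.length (by simp)
  rw [List.drop_left, wordVal_expPrefix hβ.le, List.length_append, length_expPrefix,
    Nat.add_sub_cancel_left] at h
  linarith

lemma wordVal_drop_append_lowered_add_le (hβ : 0 < β) {g r : ℕ} (hg : 1 ≤ g)
    (hd : dig β 1 (g - 1) ≠ 0) (hz : ∀ t, g ≤ t → t < g + r → dig β 1 t = 0) {u : List ℕ}
    (hadm : Adm β (u ++ expPrefix β (g + r))) {k : ℕ} (hk : k ≤ u.length + (g + r)) :
    wordVal β ((u ++ lowered β g r).drop k) + (Tb β)^[r] 1 ≤ β ^ (u.length + (g + r) - k) := by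
  rcases le_or_gt k u.length with hku | hku
  · have h := (adm_iff hβ).1 hadm k (by simp; omega)
    rw [List.drop_append_of_le_length hku, wordVal_append, length_expPrefix,
      wordVal_expPrefix_eq_wordVal_lowered_add hβ.le hg hd hz, List.length_append,
      length_expPrefix] at h
    rw [List.drop_append_of_le_length hku, wordVal_append, length_lowered hg]
    linarith
  · rw [List.drop_append, List.drop_eq_nil_of_le hku.le, List.nil_append,
      show u.length + (g + r) - k = g + r - (k - u.length) by omega]
    exact wordVal_lowered_drop_add_le hβ.le hg hd r (by omega)

theorem succIn_append_lowered (hβ : 1 < β) {g r : ℕ} (hg : 1 ≤ g) (hd : dig β 1 (g - 1) ≠ 0)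
    (hz : ∀ t, g ≤ t → t < g + r → dig β 1 t = 0) {u : List ℕ}
    (hadm : Adm β (u ++ expPrefix β (g + r))) :
    SuccIn β (u.length + (g + r)) (u ++ lowered β g r) (u ++ expPrefix β (g + r)) ∧
      (r = 0 → Full β (u ++ lowered β g r)) := by
  have hβ0 : 0 < β := by linarith
  have hpos : 0 < (Tb β)^[r] 1 :=
    Tb_iterate_one_pos_of_le (Nat.le_add_left r g) (Tb_iterate_one_pos_of_adm hβ0 hadm)
  have htail := fun k => wordVal_drop_append_lowered_add_le hβ0 hg hd hz hadm (k := k)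
  refine ⟨succIn_of_wordVal_eq_add hβ0 (by simp [length_lowered hg]) (by simp) hpos ?_ htail
      hadm (wlt_append_lowered hg hd u r), fun hr => ?_⟩
  · rw [wordVal_append, wordVal_append, length_lowered hg, length_expPrefix,
      wordVal_expPrefix_eq_wordVal_lowered_add hβ0.le hg hd hz]
    ring
  · subst hr
    refine full_of_forall_wordVal_drop_add_one_le hβ0 fun k hk => ?_
    simpa [length_lowered hg] using htail k (by simpa [length_lowered hg] using hk)

def NonFullDescent (β : ℝ) (n : ℕ) (w : List ℕ) (l : ℕ) : Prop :=
  ∃ f : ℕ → List ℕ, f 0 = w ∧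
    (∀ j, j ≤ l → (f j).length = n ∧ Adm β (f j)) ∧
    (∀ j, j < l → SuccIn β n (f (j + 1)) (f j)) ∧
    (∀ j, j < l → ¬ Full β (f j)) ∧
    Full β (f l)

lemma NonFullDescent.zero {n : ℕ} {w : List ℕ} (hw : w.length = n) (hadm : Adm β w)
    (hfull : Full β w) : NonFullDescent β n w 0 :=
  ⟨fun _ => w, rfl, fun _ _ => ⟨hw, hadm⟩, fun _ h => absurd h (Nat.not_lt_zero _),
    fun _ h => absurd h (Nat.not_lt_zero _), hfull⟩

lemma NonFullDescent.cons {n l : ℕ} {w w' : List ℕ} (hsucc : SuccIn β n w' w)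
    (hw : ¬ Full β w) (h : NonFullDescent β n w' l) : NonFullDescent β n w (l + 1) := by
  obtain ⟨f, hf0, hlen, hsuc, hnf, hfull⟩ := h
  refine ⟨fun | 0 => w | j + 1 => f j, rfl, ?_, ?_, ?_, hfull⟩
  · rintro (_ | j) hj
    exacts [⟨hsucc.2.1, hsucc.2.2.2.1⟩, hlen j (by omega)]
  · rintro (_ | j) hj
    exacts [by rwa [← hf0] at hsucc, hsuc j (by omega)]
  · rintro (_ | j) hj
    exacts [hw, hnf j (by omega)]

theorem nonFullDescent_append_expPrefix (hβ : 1 < β) {s : ℕ} (hs : 1 ≤ s) {u : List ℕ}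
    (hadm : Adm β (u ++ expPrefix β s)) :
    NonFullDescent β (u.length + s) (u ++ expPrefix β s) (tau β s) := by
  induction s using Nat.strong_induction_on generalizing u with
  | _ s ih =>
  have hg := greedyStep_pos hβ hs
  have hgs : greedyStep β s + (s - greedyStep β s) = s := by
    have := greedyStep_le (β := β) s
    omega
  obtain ⟨hsucc, hfull⟩ := succIn_append_lowered (r := s - greedyStep β s) hβ hg
    (dig_greedyStep_ne_zero hβ hs)
    (fun t h1 h2 => dig_eq_zero_of_greedyStep_le h1 (by omega)) (u := u) (by rwa [hgs])
  rw [hgs] at hsucc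
  rw [tau_eq_tau_sub_greedyStep_add_one hβ hs]
  refine .cons hsucc (not_full_append_expPrefix (by linarith) u hs) ?_
  rcases Nat.eq_zero_or_pos (s - greedyStep β s) with hr | hr
  · have hfull := hfull hr
    rw [hr] at hsucc hfull
    rw [hr, tau]
    exact .zero hsucc.1 hsucc.2.2.1 hfull
  · have hlow : u ++ lowered β (greedyStep β s) (s - greedyStep β s) =
        (u ++ (expPrefix β (greedyStep β s - 1) ++ [dig β 1 (greedyStep β s - 1) - 1])) ++
          expPrefix β (s - greedyStep β s) := by simp [lowered]
    have h := ih _ (by omega) hr (hlow ▸ hsucc.2.2.1)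
    rwa [← hlow, List.length_append, List.length_append, length_expPrefix, List.length_singleton,
      Nat.sub_add_cancel hg, add_assoc, Nat.add_sub_cancel' (greedyStep_le s)] at h

end Descent

theorem stmt15_general (β : ℝ) (hβ : 1 < β) (n s : ℕ)
    (hs1 : 1 ≤ s) (w u : List ℕ) (hw : w.length = n)
    (hdec : w = u ++ List.ofFn (fun i : Fin s => dig β 1 i)) (hadm : Adm β w) :
    ∃ f : ℕ → List ℕ, f 0 = w ∧
      (∀ j, j ≤ tau β s → (f j).length = n ∧ Adm β (f j)) ∧
      (∀ j, j < tau β s → SuccIn β n (f (j+1)) (f j)) ∧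
      (∀ j, j < tau β s → ¬ Full β (f j)) ∧
      Full β (f (tau β s)) := by
  subst hdec hw
  rw [List.length_append, List.length_ofFn]
  exact nonFullDescent_append_expPrefix hβ hs1 hadm

/-- if w ∈ Σ_β^n ends with the prefix ε₁⋯ε_s of ε(1,β), then the
τ_β(s) consecutive words ending at w are all non-full while the word
immediately preceding them is full. -/
theorem stmt15 (β : ℝ) (hβ : 1 < β) (hβn : ∀ m : ℕ, β ≠ m) (n s : ℕ)
    (hs1 : 1 ≤ s) (hsn : s ≤ n) (w u : List ℕ) (hw : w.length = n)
    (hdec : w = u ++ List.ofFn (fun i : Fin s => dig β 1 i)) (hadm : Adm β w) :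
    ∃ f : ℕ → List ℕ, f 0 = w ∧
      (∀ j, j ≤ tau β s → (f j).length = n ∧ Adm β (f j)) ∧
      (∀ j, j < tau β s → SuccIn β n (f (j+1)) (f j)) ∧
      (∀ j, j < tau β s → ¬ Full β (f j)) ∧
      Full β (f (tau β s)) :=
  stmt15_general β hβ n s hs1 w u hw hdec hadm
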